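/- Let f_n (n ∈ ℕ) and f be elements of X_Λ, i.e. f_n = log∘g_n and f = log∘g for some g_n, g ∈ X_M. For h ∈ X_Λ define J(h)(θ) = h(θ)/θ for θ ≠ 0 and J(h)(0) = liminf_{θ→0} h(θ)/θ. If f_n converges to f in the Attouch-Wets sense, then the closures in ℝ² of the epigraphs of J(f_n) converge to the closure of the epigraph of J(f): for every r > 0, sup_{x ∈ B̄_r} |dist(x, closure(epi(J(f_n)))) − dist(x, closure(epi(J(f))))| → 0 as n → ∞. -/

import Mathlib

open MeasureTheory Filter Metric Set
open scoped ENNReal Classical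

noncomputable section

/-- Epigraph of an extended-real-valued function on `ℝ`, as a subset of `ℝ²`
(which carries the box metric `dist p q = max |p₁-q₁| |p₂-q₂|`). -/
def epiE (f : ℝ → EReal) : Set (ℝ × ℝ) := {p | f p.1 ≤ (p.2 : EReal)}

/-- `awGap A B r` is `sup_{x ∈ B̄_r} |dist(x,A) - dist(x,B)|`. -/
def awGap (A B : Set (ℝ × ℝ)) (r : ℝ) : ℝ :=
  sSup ((fun x => |infDist x A - infDist x B|) '' closedBall (0 : ℝ × ℝ) r)

/-- Attouch–Wets convergence of a sequence of functions, via epigraphs. -/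
def AWTendsto (F : ℕ → ℝ → EReal) (f : ℝ → EReal) : Prop :=
  ∀ r : ℝ, 0 < r → Tendsto (fun n => awGap (epiE (F n)) (epiE f) r) atTop (nhds 0)

/-- The basic Attouch–Wets neighbourhood `V_k(f)`. -/
def Vk (k : ℕ) (f : ℝ → EReal) : Set (ℝ → EReal) :=
  {g | awGap (epiE g) (epiE f) (k : ℝ) < 1 / (k : ℝ)}

/-- Convexity for extended-real-valued functions on `ℝ`. -/
def ERConvex (f : ℝ → EReal) : Prop :=
  ∀ x y a b : ℝ, 0 ≤ a → 0 ≤ b → a + b = 1 →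
    f (a * x + b * y) ≤ (a : EReal) * f x + (b : EReal) * f y

/-- Effective domain of an extended-real-valued function. -/
def effDom (f : ℝ → EReal) : Set ℝ := {θ | f θ < ⊤}

/-- The moment generating function of a measure on `ℝ`, with values in `(0,∞]`. -/
def mgfE (ν : Measure ℝ) : ℝ → EReal :=
  fun θ => ((∫⁻ x, ENNReal.ofReal (Real.exp (θ * x)) ∂ν : ℝ≥0∞) : EReal)

/-- `log` of a probability, with the convention `log 0 = -∞`. -/
def elog (p : ℝ≥0∞) : EReal := if p = 0 then ⊥ else ((Real.log p.toReal : ℝ) : EReal)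

/-- The empirical moment generating function estimator
`M_n(θ) = (1/n) ∑_{i<n} exp (θ X_i)`. -/
def Mn {Ω : Type*} (X : ℕ → Ω → ℝ) (n : ℕ) (ω : Ω) : ℝ → EReal :=
  fun θ => (((n : ℝ)⁻¹ * ∑ i ∈ Finset.range n, Real.exp (θ * X i ω) : ℝ) : EReal)

/-- The rate value `I_M(f) = -inf_{k ≥ 1} limsup_n (1/n) log ℙ(M_n ∈ V_k(f))`. -/
def IM {Ω : Type*} [MeasurableSpace Ω] (P : Measure Ω) (X : ℕ → Ω → ℝ)
    (f : ℝ → EReal) : EReal :=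
  - ⨅ k ∈ Set.Ici 1, limsup
      (fun n : ℕ => (((n : ℝ)⁻¹ : ℝ) : EReal) * elog (P {ω | Mn X n ω ∈ Vk k f})) atTop

/-- `f` is lower semicontinuous, convex and `[0,∞]`-valued. -/
def IsAdm0 (f : ℝ → EReal) : Prop :=
  LowerSemicontinuous f ∧ ERConvex f ∧ ∀ θ, 0 ≤ f θ

/-- `log : (−∞,∞] → [−∞,∞]`, with `log ∞ = ∞` and `log x = -∞` for `x ≤ 0`. -/
def logE (x : EReal) : EReal :=
  if x = ⊤ then ⊤ else if x ≤ 0 then ⊥ else ((Real.log x.toReal : ℝ) : EReal)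

/-- Membership in `X_M`: lower semicontinuous convex `(0,∞]`-valued with
`f 0 = 1`, agreeing with the mgf of some probability measure where finite. -/
def InXM (f : ℝ → EReal) : Prop :=
  LowerSemicontinuous f ∧ ERConvex f ∧ (∀ θ, 0 < f θ) ∧ f 0 = 1 ∧
    ∃ ν : Measure ℝ, IsProbabilityMeasure ν ∧ ∀ θ, f θ < ⊤ → f θ = mgfE ν θ

/-- The Jarzynski operator `J(h)(θ) = h(θ)/θ` for `θ ≠ 0`, and
`J(h)(0) = liminf_{θ → 0} h(θ)/θ`. -/
def Jmap (h : ℝ → EReal) : ℝ → EReal := fun θ =>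
  if θ = 0 then
    liminf (fun t : ℝ => h t * ((t⁻¹ : ℝ) : EReal)) (nhdsWithin 0 {(0 : ℝ)}ᶜ)
  else h θ * ((θ⁻¹ : ℝ) : EReal)

/-!
Every `h ∈ X_Λ` is convex with `h 0 = 0`, the logarithm of a moment generating function being
convex by Hölder's inequality; hence `J(h)(θ) = h(θ)/θ` is nondecreasing in `θ`.
Suppose the epigraphs of `g` and `h` are `δ`-close on a large ball and let `(θ, b) ∈ epi J(h)`.
If `θ` is bounded away from `0`, the point `(θ, θ b) ∈ epi h` has a neighbour `(θ', y) ∈ epi g`,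
and `(θ', y / θ') ∈ epi J(g)` is close to `(θ, b)`. Otherwise `(θ - ε/2, b + ε) ∈ epi J(g)`:
if not, `(θ - ε/2, (θ - ε/2)(b + ε)) ∈ epi g` would have a neighbour `(s, z) ∈ epi h` with
`s < θ` and `J(h)(s) > b`, against the monotonicity of `J(h)`. Distances to a set and to its
closure agree, so the closures change nothing.
-/

open Topology

theorem Jmap_zero (h : ℝ → EReal) :
    Jmap h 0 = liminf (fun t : ℝ => h t * ((t⁻¹ : ℝ) : EReal)) (𝓝[≠] 0) :=
  if_pos rfl

theorem Jmap_of_ne_zero (h : ℝ → EReal) {θ : ℝ} (hθ : θ ≠ 0) :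
    Jmap h θ = h θ * ((θ⁻¹ : ℝ) : EReal) :=
  if_neg hθ

theorem Jmap_le_coe_iff_of_pos {h : ℝ → EReal} {θ : ℝ} (hθ : 0 < θ) {b : ℝ} :
    Jmap h θ ≤ b ↔ h θ ≤ ((θ * b : ℝ) : EReal) := by
  have hb : (b : EReal) = ((θ * b : ℝ) : EReal) / θ := by
    rw [← EReal.coe_div, mul_div_cancel_left₀ b hθ.ne']
  rw [Jmap_of_ne_zero h hθ.ne', hb]
  exact (EReal.strictMono_div_right_of_pos (EReal.coe_pos.2 hθ) (EReal.coe_ne_top θ)).le_iff_le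

theorem Jmap_le_coe_iff_of_neg {h : ℝ → EReal} {θ : ℝ} (hθ : θ < 0) {b : ℝ} :
    Jmap h θ ≤ b ↔ ((θ * b : ℝ) : EReal) ≤ h θ := by
  have hb : (b : EReal) = ((θ * b : ℝ) : EReal) / θ := by
    rw [← EReal.coe_div, mul_div_cancel_left₀ b hθ.ne]
  rw [Jmap_of_ne_zero h hθ.ne, hb]
  exact (EReal.strictAnti_div_right_of_neg (EReal.coe_neg'.2 hθ) (EReal.coe_ne_bot θ)).le_iff_ge

namespace ERConvex

variable {h : ℝ → EReal} (hconv : ERConvex h) (h0 : h 0 = 0)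
include hconv h0

theorem apply_mul_le {a : ℝ} (ha0 : 0 ≤ a) (ha1 : a ≤ 1) (x : ℝ) :
    h (a * x) ≤ a * h x := by
  simpa [h0] using hconv x 0 a (1 - a) ha0 (by linarith) (by ring)

theorem ne_bot (θ : ℝ) : h θ ≠ ⊥ := by
  intro hθ
  have key := hconv θ (-θ) (1 / 2) (1 / 2) (by norm_num) (by norm_num) (by norm_num)
  rw [show 1 / 2 * θ + 1 / 2 * -θ = 0 by ring, h0, hθ,
    EReal.coe_mul_bot_of_pos (by norm_num), EReal.bot_add] at key
  exact EReal.bot_lt_zero.not_ge key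

theorem exists_eq_coe {θ : ℝ} (hθ : h θ ≠ ⊤) : ∃ u : ℝ, h θ = u :=
  ⟨_, (EReal.coe_toReal hθ (hconv.ne_bot h0 θ)).symm⟩

theorem Jmap_le_Jmap_of_neg {s t : ℝ} (hst : s < t) (ht : t < 0) : Jmap h s ≤ Jmap h t := by
  have hs : s < 0 := hst.trans ht
  rw [Jmap_of_ne_zero h hs.ne, Jmap_of_ne_zero h ht.ne]
  by_cases hsT : h s = ⊤
  · simp [hsT, EReal.top_mul_coe_of_neg (inv_lt_zero.2 hs)]
  obtain ⟨u, hu⟩ := hconv.exists_eq_coe h0 hsT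
  have key := hconv.apply_mul_le h0 (a := t / s) (div_nonneg_of_nonpos ht.le hs.le)
    ((div_le_one_of_neg hs).2 hst.le) s
  rw [div_mul_cancel₀ t hs.ne, hu, ← EReal.coe_mul] at key
  obtain ⟨w, hw⟩ := hconv.exists_eq_coe h0 (key.trans_lt (EReal.coe_lt_top _)).ne
  rw [hw, EReal.coe_le_coe_iff] at key
  rw [hu, hw, ← EReal.coe_mul, ← EReal.coe_mul, EReal.coe_le_coe_iff]
  calc u * s⁻¹ = t / s * u * t⁻¹ := by field_simp [hs.ne, ht.ne]
    _ ≤ w * t⁻¹ := mul_le_mul_of_nonpos_right key (inv_nonpos.2 ht.le)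

theorem Jmap_le_Jmap_of_pos {s t : ℝ} (hs : 0 < s) (hst : s < t) : Jmap h s ≤ Jmap h t := by
  have ht : 0 < t := hs.trans hst
  rw [Jmap_of_ne_zero h hs.ne', Jmap_of_ne_zero h ht.ne']
  by_cases htT : h t = ⊤
  · simp [htT, EReal.top_mul_coe_of_pos (inv_pos.2 ht)]
  obtain ⟨w, hw⟩ := hconv.exists_eq_coe h0 htT
  have key := hconv.apply_mul_le h0 (a := s / t) (div_nonneg hs.le ht.le)
    ((div_le_one ht).2 hst.le) t
  rw [div_mul_cancel₀ s ht.ne', hw, ← EReal.coe_mul] at key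
  obtain ⟨u, hu⟩ := hconv.exists_eq_coe h0 (key.trans_lt (EReal.coe_lt_top _)).ne
  rw [hu, EReal.coe_le_coe_iff] at key
  rw [hu, hw, ← EReal.coe_mul, ← EReal.coe_mul, EReal.coe_le_coe_iff]
  calc u * s⁻¹ ≤ s / t * w * s⁻¹ := mul_le_mul_of_nonneg_right key (inv_nonneg.2 hs.le)
    _ = w * t⁻¹ := by field_simp [hs.ne', ht.ne']

theorem Jmap_le_Jmap_of_neg_of_pos {s t : ℝ} (hs : s < 0) (ht : 0 < t) :
    Jmap h s ≤ Jmap h t := by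
  rw [Jmap_of_ne_zero h hs.ne, Jmap_of_ne_zero h ht.ne']
  by_cases hsT : h s = ⊤
  · simp [hsT, EReal.top_mul_coe_of_neg (inv_lt_zero.2 hs)]
  by_cases htT : h t = ⊤
  · simp [htT, EReal.top_mul_coe_of_pos (inv_pos.2 ht)]
  obtain ⟨u, hu⟩ := hconv.exists_eq_coe h0 hsT
  obtain ⟨w, hw⟩ := hconv.exists_eq_coe h0 htT
  have hts : 0 < t - s := by linarith
  have key := hconv s t (t / (t - s)) (-s / (t - s)) (by positivity)
    (div_nonneg (by linarith) hts.le) (by field_simp; ring)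
  rw [show t / (t - s) * s + -s / (t - s) * t = 0 by field_simp; ring, h0, hu, hw,
    ← EReal.coe_mul, ← EReal.coe_mul, ← EReal.coe_add, ← EReal.coe_zero,
    EReal.coe_le_coe_iff, show t / (t - s) * u + -s / (t - s) * w = (t * u + -s * w) / (t - s)
      by ring, le_div_iff₀ hts, zero_mul] at key
  rw [hu, hw, ← EReal.coe_mul, ← EReal.coe_mul, EReal.coe_le_coe_iff, ← sub_nonneg]
  calc (0 : ℝ) ≤ (t * u + -s * w) / -(s * t) := div_nonneg key (by nlinarith)
    _ = w * t⁻¹ - u * s⁻¹ := by field_simp [hs.ne, ht.ne']; ring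

theorem Jmap_le_Jmap {s t : ℝ} (hs : s ≠ 0) (ht : t ≠ 0) (hst : s < t) :
    Jmap h s ≤ Jmap h t := by
  rcases ht.lt_or_gt with ht0 | ht0
  · exact hconv.Jmap_le_Jmap_of_neg h0 hst ht0
  rcases hs.lt_or_gt with hs0 | hs0
  · exact hconv.Jmap_le_Jmap_of_neg_of_pos h0 hs0 ht0
  · exact hconv.Jmap_le_Jmap_of_pos h0 hs0 hst

theorem monotone_Jmap : Monotone (Jmap h) := by
  intro s t hst
  rcases hst.eq_or_lt with rfl | hst
  · rfl
  rcases eq_or_ne s 0 with rfl | hs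
  · rw [Jmap_zero]
    refine liminf_le_of_frequently_le' ?_
    have hnear : ∀ᶠ u in 𝓝[>] (0 : ℝ), u ∈ Ioo 0 t := Ioo_mem_nhdsGT hst
    refine (hnear.frequently.filter_mono (nhdsGT_le_nhdsNE 0)).mono fun u hu => ?_
    rw [← Jmap_of_ne_zero h hu.1.ne']
    exact hconv.Jmap_le_Jmap h0 hu.1.ne' hst.ne' hu.2
  rcases eq_or_ne t 0 with rfl | ht
  · rw [Jmap_zero]
    refine le_liminf_of_le (by isBoundedDefault) ?_
    filter_upwards [nhdsWithin_le_nhds (Ioi_mem_nhds hst), self_mem_nhdsWithin] with u hsu hu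
    rw [← Jmap_of_ne_zero h hu]
    exact hconv.Jmap_le_Jmap h0 hs hu hsu
  exact hconv.Jmap_le_Jmap h0 hs ht hst

theorem epiE_Jmap_nonempty : (epiE (Jmap h)).Nonempty :=
  ⟨(-1, -(h (-1)).toReal), (Jmap_le_coe_iff_of_neg (by norm_num)).2 <| by
    simpa using EReal.coe_toReal_le (hconv.ne_bot h0 (-1))⟩

end ERConvex

theorem infDist_le_infDist_add_of_forall_mem_closedBall {α : Type*} [PseudoMetricSpace α]
    {A B : Set α} {x z : α} {R ε : ℝ} (hB : B.Nonempty) (hR : dist x z + infDist x B < R)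
    (hBA : ∀ b ∈ B ∩ closedBall z R, infDist b A ≤ ε) :
    infDist x A ≤ infDist x B + ε := by
  refine le_of_forall_pos_lt_add fun η hη => ?_
  set gap := R - (dist x z + infDist x B)
  obtain ⟨b, hb, hxb⟩ := (infDist_lt_iff hB).1
    (lt_add_of_pos_right (infDist x B) (lt_min hη (sub_pos.2 hR)))
  have hbz : dist b z ≤ R := by linarith [dist_triangle_left b z x, min_le_right η gap]
  have hbA := hBA b ⟨hb, mem_closedBall.2 hbz⟩
  linarith [infDist_le_infDist_add_dist (s := A) (x := x) (y := b), min_le_left η gap]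

theorem mem_closedBall_zero_iff_abs {p : ℝ × ℝ} {R : ℝ} :
    p ∈ closedBall (0 : ℝ × ℝ) R ↔ |p.1| ≤ R ∧ |p.2| ≤ R := by
  rw [mem_closedBall, Prod.dist_eq, max_le_iff, Real.dist_eq, Real.dist_eq]
  simp

theorem dist_mk_mk (a b c d : ℝ) : dist ((a, b) : ℝ × ℝ) (c, d) = max |a - c| |b - d| := by
  simp [Prod.dist_eq, Real.dist_eq]

section awGap

variable {A B : Set (ℝ × ℝ)} {r : ℝ}

theorem le_awGap {x : ℝ × ℝ} (hx : x ∈ closedBall (0 : ℝ × ℝ) r) :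
    |infDist x A - infDist x B| ≤ awGap A B r :=
  le_csSup ((isCompact_closedBall 0 r).bddAbove_image (by fun_prop)) (mem_image_of_mem _ hx)

theorem awGap_nonneg (A B : Set (ℝ × ℝ)) (hr : 0 ≤ r) : 0 ≤ awGap A B r :=
  (abs_nonneg _).trans (le_awGap (mem_closedBall_self hr))

theorem awGap_comm (A B : Set (ℝ × ℝ)) (r : ℝ) : awGap A B r = awGap B A r := by
  simp only [awGap, abs_sub_comm]

theorem awGap_closure (A B : Set (ℝ × ℝ)) (r : ℝ) :
    awGap (closure A) (closure B) r = awGap A B r := by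
  simp only [awGap, infDist_closure]

theorem exists_dist_lt_of_awGap_lt {δ : ℝ} (hB : B.Nonempty) (hgap : awGap A B r < δ)
    {x : ℝ × ℝ} (hxA : x ∈ A) (hx : x ∈ closedBall (0 : ℝ × ℝ) r) :
    ∃ y ∈ B, dist x y < δ := by
  refine (infDist_lt_iff hB).1 (lt_of_le_of_lt ?_ hgap)
  simpa [infDist_zero_of_mem hxA, abs_of_nonneg infDist_nonneg] using
    le_awGap (A := A) (B := B) hx

theorem awGap_le_of_forall_infDist_le {R ε : ℝ} (hA : A.Nonempty) (hB : B.Nonempty)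
    (hε : 0 ≤ ε) (hR : 2 * r + infDist 0 B + ε < R)
    (hAB : ∀ p ∈ A ∩ closedBall 0 R, infDist p B ≤ ε)
    (hBA : ∀ p ∈ B ∩ closedBall 0 R, infDist p A ≤ ε) :
    awGap A B r ≤ ε := by
  refine Real.sSup_le ?_ hε
  rintro _ ⟨x, hx, rfl⟩
  have hx0 : dist x 0 ≤ r := mem_closedBall.1 hx
  have hxB : infDist x B ≤ infDist 0 B + r := by
    linarith [infDist_le_infDist_add_dist (s := B) (x := x) (y := 0)]
  have hAx := infDist_le_infDist_add_of_forall_mem_closedBall hB (by linarith) hBA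
  have hBx := infDist_le_infDist_add_of_forall_mem_closedBall hA (by linarith) hAB
  exact abs_sub_le_iff.2 ⟨by linarith, by linarith⟩

end awGap

section Transfer

variable {g h : ℝ → EReal} {R ε δ : ℝ}
  (hR : 0 ≤ R) (hε : 0 < ε) (hε1 : ε ≤ 1) (hδ : δ * (R + 1) ≤ ε ^ 2 / 16)
include hR hε hε1 hδ

theorem infDist_epiE_Jmap_le_of_gt (hg : (epiE g).Nonempty)
    (hgap : awGap (epiE h) (epiE g) ((R + 1) ^ 2) < δ) {θ b : ℝ} (hp : Jmap h θ ≤ b)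
    (hθR : θ ≤ R) (hbR : |b| ≤ R) (hθ : ε / 8 < θ) :
    infDist (θ, b) (epiE (Jmap g)) ≤ ε := by
  have hδ0 : 0 < δ := (awGap_nonneg _ _ (by positivity)).trans_lt hgap
  have hδε : δ ≤ ε / 16 := by nlinarith
  have hθ0 : 0 < θ := by linarith
  have hθb : |θ * b| ≤ R * R := by
    rw [abs_mul, abs_of_pos hθ0]; exact mul_le_mul hθR hbR (abs_nonneg b) hR
  obtain ⟨⟨θ', y⟩, hq, hdist⟩ := exists_dist_lt_of_awGap_lt (x := (θ, θ * b)) hg hgap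
    ((Jmap_le_coe_iff_of_pos hθ0).1 hp)
    (mem_closedBall_zero_iff_abs.2 ⟨by rw [abs_of_pos hθ0]; nlinarith, by nlinarith⟩)
  rw [dist_mk_mk, max_lt_iff, abs_lt, abs_lt] at hdist
  have hθ' : ε / 16 < θ' := by linarith
  have hθ'0 : 0 < θ' := by linarith
  have hq' : (θ', y / θ') ∈ epiE (Jmap g) :=
    (Jmap_le_coe_iff_of_pos hθ'0).2 (by rwa [mul_div_cancel₀ y hθ'0.ne'])
  refine (infDist_le_dist_of_mem hq').trans ?_
  rw [dist_mk_mk]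
  refine max_le (abs_le.2 ⟨by linarith, by linarith⟩) ?_
  have hshift : |(θ' - θ) * b| ≤ δ * R :=
    (abs_mul _ _).trans_le (mul_le_mul (abs_le.2 ⟨by linarith, by linarith⟩) hbR
      (abs_nonneg b) hδ0.le)
  rw [show b - y / θ' = ((θ' - θ) * b + (θ * b - y)) / θ' by field_simp; ring, abs_div,
    abs_of_pos hθ'0, div_le_iff₀ hθ'0]
  calc |(θ' - θ) * b + (θ * b - y)| ≤ δ * R + δ :=
        (abs_add_le _ _).trans (add_le_add hshift (abs_le.2 ⟨by linarith, by linarith⟩))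
    _ ≤ ε * θ' := by nlinarith

theorem infDist_epiE_Jmap_le_of_le (hh : (epiE h).Nonempty) (hmono : Monotone (Jmap h))
    (hgap : awGap (epiE g) (epiE h) ((R + 1) ^ 2) < δ) {θ b : ℝ} (hp : Jmap h θ ≤ b)
    (hθR : |θ| ≤ R) (hbR : |b| ≤ R) (hθ : θ ≤ ε / 8) :
    infDist (θ, b) (epiE (Jmap g)) ≤ ε := by
  have hδ0 : 0 < δ := (awGap_nonneg _ _ (by positivity)).trans_lt hgap
  have hδε : δ ≤ ε / 16 := by nlinarith
  obtain ⟨hθR₁, hθR₂⟩ := abs_le.1 hθR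
  obtain ⟨hbR₁, hbR₂⟩ := abs_le.1 hbR
  set t := θ - ε / 2 with ht_def
  have ht : t < 0 := by linarith
  suffices hmem : (t, b + ε) ∈ epiE (Jmap g) by
    refine (infDist_le_dist_of_mem hmem).trans ?_
    rw [dist_mk_mk, show θ - t = ε / 2 by ring, show b - (b + ε) = -ε by ring, abs_neg,
      abs_of_pos hε, abs_of_pos (by linarith)]
    exact max_le (by linarith) le_rfl
  by_contra hnot
  have hlt : g t < ((t * (b + ε) : ℝ) : EReal) := not_le.1 fun hle =>
    hnot ((Jmap_le_coe_iff_of_neg ht).2 hle)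
  have htb : |t * (b + ε)| ≤ (R + 1) * (R + 1) := by
    rw [abs_mul]
    exact mul_le_mul (abs_le.2 ⟨by linarith, by linarith⟩)
      (abs_le.2 ⟨by linarith, by linarith⟩) (abs_nonneg _) (by linarith)
  obtain ⟨⟨s, z⟩, hsz, hdist⟩ := exists_dist_lt_of_awGap_lt (x := (t, t * (b + ε))) hh hgap
    hlt.le
    (mem_closedBall_zero_iff_abs.2 ⟨abs_le.2 ⟨by nlinarith, by nlinarith⟩, by nlinarith⟩)
  rw [dist_mk_mk, max_lt_iff, abs_lt, abs_lt] at hdist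
  have hs : s < 0 := by linarith
  have hsb : s * b ≤ z := EReal.coe_le_coe_iff.1 <|
    ((Jmap_le_coe_iff_of_neg hs).1 ((hmono (by linarith : s ≤ θ)).trans hp)).trans hsz
  have hshift : |(s - t) * b| ≤ δ * R :=
    (abs_mul _ _).trans_le (mul_le_mul (abs_le.2 ⟨by linarith, by linarith⟩) hbR
      (abs_nonneg b) hδ0.le)
  have htε : t * ε ≤ -(3 / 8) * ε ^ 2 := by nlinarith
  nlinarith [(abs_le.1 hshift).1]

theorem infDist_epiE_Jmap_le (hg : (epiE g).Nonempty) (hh : (epiE h).Nonempty)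
    (hmono : Monotone (Jmap h)) (hgap : awGap (epiE h) (epiE g) ((R + 1) ^ 2) < δ) :
    ∀ p ∈ epiE (Jmap h) ∩ closedBall 0 R, infDist p (epiE (Jmap g)) ≤ ε := by
  rintro ⟨θ, b⟩ ⟨hp, hpR⟩
  obtain ⟨hθR, hbR⟩ := mem_closedBall_zero_iff_abs.1 hpR
  rcases le_or_gt θ (ε / 8) with hθ | hθ
  · rw [awGap_comm] at hgap
    exact infDist_epiE_Jmap_le_of_le hR hε hε1 hδ hh hmono hgap hp hθR hbR hθ
  · exact infDist_epiE_Jmap_le_of_gt hR hε hε1 hδ hg hgap hp (le_of_abs_le hθR) hbR hθ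

end Transfer

theorem AWTendsto.jmap {F : ℕ → ℝ → EReal} {f : ℝ → EReal}
    (hFc : ∀ n, ERConvex (F n)) (hF0 : ∀ n, F n 0 = 0) (hfc : ERConvex f) (hf0 : f 0 = 0)
    (haw : AWTendsto F f) : AWTendsto (fun n => Jmap (F n)) (Jmap f) := by
  have epiE_nonempty : ∀ {h : ℝ → EReal}, h 0 = 0 → (epiE h).Nonempty :=
    fun h0 => ⟨(0, 0), by simp [epiE, h0]⟩
  intro r hr
  set R := 2 * r + infDist 0 (epiE (Jmap f)) + 2
  have hR : 0 ≤ R := by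
    have : 0 ≤ infDist (0 : ℝ × ℝ) (epiE (Jmap f)) := infDist_nonneg
    linarith
  refine tendsto_order.2 ⟨fun a ha => .of_forall fun n => ha.trans_le (awGap_nonneg _ _ hr.le),
    fun a ha => ?_⟩
  set ε := min (a / 2) 1
  have hε : 0 < ε := lt_min (by linarith) one_pos
  have hε1 : ε ≤ 1 := min_le_right _ _
  set δ := ε ^ 2 / (16 * (R + 1))
  have hδ0 : 0 < δ := by positivity
  have hδ : δ * (R + 1) ≤ ε ^ 2 / 16 := le_of_eq <| by simp only [δ]; field_simp
  filter_upwards [(haw ((R + 1) ^ 2) (by positivity)).eventually (gt_mem_nhds hδ0)] with n hn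
  calc awGap (epiE (Jmap (F n))) (epiE (Jmap f)) r ≤ ε :=
        awGap_le_of_forall_infDist_le ((hFc n).epiE_Jmap_nonempty (hF0 n))
          (hfc.epiE_Jmap_nonempty hf0) hε.le (by linarith)
          (infDist_epiE_Jmap_le hR hε hε1 hδ (epiE_nonempty hf0) (epiE_nonempty (hF0 n))
            ((hFc n).monotone_Jmap (hF0 n)) hn)
          (infDist_epiE_Jmap_le hR hε hε1 hδ (epiE_nonempty (hF0 n)) (epiE_nonempty hf0)
            (hfc.monotone_Jmap hf0) (by rwa [awGap_comm]))
    _ < a := (min_le_left _ _).trans_lt (half_lt_self ha)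

theorem logE_coe_ennreal (p : ℝ≥0∞) : logE (p : EReal) = ENNReal.log p := by
  rcases eq_or_ne p ⊤ with rfl | hp
  · simp [logE]
  rcases eq_or_ne p 0 with rfl | hp0
  · simp [logE]
  rw [ENNReal.log_pos_real hp0 hp, logE, if_neg (by simpa using hp),
    if_neg (not_le.2 (EReal.coe_ennreal_pos.2 (pos_iff_ne_zero.2 hp0))), EReal.toReal_coe_ennreal]

theorem logE_ne_bot {x : EReal} (hx : 0 < x) : logE x ≠ ⊥ := by
  unfold logE
  split_ifs with htop hle
  · simp
  · exact absurd hle hx.not_ge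
  · exact EReal.coe_ne_bot _

theorem erConvex_log_lintegral_exp (ν : Measure ℝ) :
    ERConvex fun θ => ENNReal.log (∫⁻ x, ENNReal.ofReal (Real.exp (θ * x)) ∂ν) := by
  intro x y a b ha hb hab
  have hexp : ∀ z : ℝ, ENNReal.ofReal (Real.exp ((a * x + b * y) * z)) =
      ENNReal.ofReal (Real.exp (x * z)) ^ a * ENNReal.ofReal (Real.exp (y * z)) ^ b := by
    intro z
    rw [ENNReal.ofReal_rpow_of_pos (Real.exp_pos _), ENNReal.ofReal_rpow_of_pos (Real.exp_pos _),
      ← ENNReal.ofReal_mul (by positivity), ← Real.exp_mul, ← Real.exp_mul, ← Real.exp_add]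
    ring_nf
  simp only [hexp]
  calc _ ≤ ENNReal.log ((∫⁻ z, ENNReal.ofReal (Real.exp (x * z)) ∂ν) ^ a *
          (∫⁻ z, ENNReal.ofReal (Real.exp (y * z)) ∂ν) ^ b) :=
        ENNReal.log_monotone <|
          ENNReal.lintegral_mul_norm_pow_le (by fun_prop) (by fun_prop) ha hb hab
    _ = _ := by rw [ENNReal.log_mul_add, ENNReal.log_rpow, ENNReal.log_rpow]

namespace InXM

variable {g : ℝ → EReal} (hg : InXM g)
include hg

theorem logE_zero : logE (g 0) = 0 := by
  rw [hg.2.2.2.1, ← EReal.coe_ennreal_one, logE_coe_ennreal, ENNReal.log_one]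

theorem erConvex_logE : ERConvex fun θ => logE (g θ) := by
  obtain ⟨-, hconv, hpos, -, ν, -, hν⟩ := hg
  have hL : ∀ θ, g θ < ⊤ →
      logE (g θ) = ENNReal.log (∫⁻ x, ENNReal.ofReal (Real.exp (θ * x)) ∂ν) :=
    fun θ hθ => by rw [hν θ hθ, mgfE, logE_coe_ennreal]
  have hne_bot : ∀ {c : ℝ} θ, 0 ≤ c → (c : EReal) * logE (g θ) ≠ ⊥ := fun θ hc =>
    (EReal.mul_ne_bot _ _).2 ⟨.inl (EReal.coe_ne_bot _), .inr (logE_ne_bot (hpos θ)),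
      .inl (EReal.coe_ne_top _), .inl (EReal.coe_nonneg.2 hc)⟩
  have hne_top : ∀ {c : ℝ} {θ}, g θ ≠ ⊤ → (c : EReal) * g θ ≠ ⊤ := fun hθ => by
    rw [← EReal.coe_toReal hθ (ne_bot_of_gt (hpos _)), ← EReal.coe_mul]
    exact EReal.coe_ne_top _
  have htop : ∀ {c : ℝ} {θ} (e : EReal), 0 < c → g θ = ⊤ → e ≠ ⊥ →
      (c : EReal) * logE (g θ) + e = ⊤ := by
    intro c θ e hc hθ he
    rw [hθ, show logE ⊤ = ⊤ by simp [logE], EReal.coe_mul_top_of_pos hc,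
      EReal.top_add_of_ne_bot he]
  intro x y a b ha hb hab
  dsimp only
  rcases ha.eq_or_lt with rfl | ha
  · obtain rfl : b = 1 := by linarith
    simp
  rcases hb.eq_or_lt with rfl | hb
  · obtain rfl : a = 1 := by linarith
    simp
  by_cases hx : g x = ⊤
  · rw [htop _ ha hx (hne_bot y hb.le)]; exact le_top
  by_cases hy : g y = ⊤
  · rw [add_comm ((a : EReal) * _), htop _ hb hy (hne_bot x ha.le)]; exact le_top
  have hz : g (a * x + b * y) < ⊤ := (hconv x y a b ha.le hb.le hab).trans_lt
    (EReal.add_lt_top (hne_top hx) (hne_top hy))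
  rw [hL _ hz, hL x (lt_top_iff_ne_top.2 hx), hL y (lt_top_iff_ne_top.2 hy)]
  exact erConvex_log_lintegral_exp ν x y a b ha.le hb.le hab

end InXM

/-- Continuity of the Jarzynski operator on `X_Λ` with respect to Attouch–Wets
convergence of the closures of epigraphs. -/
theorem jarzynski_continuous
    (F : ℕ → ℝ → EReal) (f : ℝ → EReal)
    (hF : ∀ n, ∃ g : ℝ → EReal, InXM g ∧ F n = fun θ => logE (g θ))
    (hf : ∃ g : ℝ → EReal, InXM g ∧ f = fun θ => logE (g θ))
    (haw : AWTendsto F f) :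
    ∀ r : ℝ, 0 < r →
      Tendsto (fun n =>
          awGap (closure (epiE (Jmap (F n)))) (closure (epiE (Jmap f))) r)
        atTop (nhds 0) := by
  obtain ⟨g, hg, rfl⟩ := hf
  have hFn : ∀ n, ERConvex (F n) ∧ F n 0 = 0 := fun n => by
    obtain ⟨gn, hgn, hFgn⟩ := hF n
    exact hFgn ▸ ⟨hgn.erConvex_logE, hgn.logE_zero⟩
  intro r hr
  simpa only [awGap_closure] using
    haw.jmap (fun n => (hFn n).1) (fun n => (hFn n).2) hg.erConvex_logE hg.logE_zero r hr

end
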